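/- The functions J̃_{0i} = R_i/√(−2H) (defined where H < 0) together with J_{ij} close the Lie–Poisson algebra so(N+1): in particular {R_i, R_j} = −2 H J_{ij} and {J_{ij}, R_k} = δ_{ik}R_j − δ_{jk}R_i. -/

import Mathlib

open Filter

/-- Euclidean norm of a point of ℝᴺ. -/
noncomputable def nrm {N : ℕ} (q : Fin N → ℝ) : ℝ := Real.sqrt (∑ i, q i ^ 2)

/-- The canonical Poisson bracket {F,G} = Σᵢ (∂F/∂qᵢ ∂G/∂pᵢ − ∂F/∂pᵢ ∂G/∂qᵢ)
on phase space ℝᴺ × ℝᴺ, evaluated at a point `x = (q,p)`. -/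
noncomputable def pbracket {N : ℕ}
    (F G : (Fin N → ℝ) × (Fin N → ℝ) → ℝ)
    (x : (Fin N → ℝ) × (Fin N → ℝ)) : ℝ :=
  ∑ i : Fin N,
    (deriv (fun t => F (Function.update x.1 i t, x.2)) (x.1 i) *
       deriv (fun t => G (x.1, Function.update x.2 i t)) (x.2 i) -
     deriv (fun t => F (x.1, Function.update x.2 i t)) (x.2 i) *
       deriv (fun t => G (Function.update x.1 i t, x.2)) (x.1 i))

/-- Angular momentum component J_{ij} = qᵢ pⱼ − qⱼ pᵢ. -/
def J {N : ℕ} (i j : Fin N) (x : (Fin N → ℝ) × (Fin N → ℝ)) : ℝ :=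
  x.1 i * x.2 j - x.1 j * x.2 i

/-- The deformed Coulomb Hamiltonian H = |q| p² / (2(η+|q|)) − k/(η+|q|). -/
noncomputable def Ham {N : ℕ} (η k : ℝ)
    (x : (Fin N → ℝ) × (Fin N → ℝ)) : ℝ :=
  nrm x.1 * (∑ i, x.2 i ^ 2) / (2 * (η + nrm x.1)) - k / (η + nrm x.1)

/-- The i-th component of the deformed Runge–Lenz vector. -/
noncomputable def RL {N : ℕ} (η k : ℝ) (i : Fin N)
    (x : (Fin N → ℝ) × (Fin N → ℝ)) : ℝ :=
  (∑ j, x.2 j * (x.1 j * x.2 i - x.1 i * x.2 j)) +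
    x.1 i / nrm x.1 * (η * Ham η k x + k)

/-!
Wherever `q ≠ 0` and `η + |q| ≠ 0` one has `η H + k = |q| (η |p|² / 2 + k) / (η + |q|)`, so
the Runge–Lenz vector takes the form `R = (q·p) p + g q` with
`g = (η |p|² / 2 + k) / (η + |q|) - |p|²` a function of `|q|` and `|p|²` alone. The Jacobian of
any such field is determined by three scalars, and expanding the brackets gives
`{J_ij, R_m} = δ_im R_j - δ_jm R_i` and `{R_i, R_j} = c J_ij` for a scalar `c` built from them,
which for this `g` works out to `-2 H`.
-/

open Finset Function Topology

section Coordinates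

variable {N : ℕ}

lemma hasDerivAt_update_apply (v : Fin N → ℝ) (m a : Fin N) (t : ℝ) :
    HasDerivAt (fun t => update v m t a) (if a = m then 1 else 0) t := by
  simpa [Pi.single_apply] using hasDerivAt_pi.1 (hasDerivAt_update v m t) a

lemma hasDerivAt_sum_update_mul (v w : Fin N → ℝ) (m : Fin N) (t : ℝ) :
    HasDerivAt (fun t => ∑ l, update v m t l * w l) (w m) t := by
  simpa using HasDerivAt.fun_sum fun l (_ : l ∈ univ) =>
    (hasDerivAt_update_apply v m l t).mul_const (w l)

lemma hasDerivAt_sum_mul_update (v w : Fin N → ℝ) (m : Fin N) (t : ℝ) :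
    HasDerivAt (fun t => ∑ l, w l * update v m t l) (w m) t := by
  simpa [mul_comm] using hasDerivAt_sum_update_mul v w m t

lemma hasDerivAt_sum_sq_update (v : Fin N → ℝ) (m : Fin N) :
    HasDerivAt (fun t => ∑ l, update v m t l ^ 2) (2 * v m) (v m) := by
  simpa using HasDerivAt.fun_sum fun l (_ : l ∈ univ) =>
    (hasDerivAt_update_apply v m l (v m)).fun_pow 2

lemma sum_sq_pos {v : Fin N → ℝ} (hv : v ≠ 0) : 0 < ∑ l, v l ^ 2 := by
  obtain ⟨l, hl⟩ := Function.ne_iff.1 hv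
  exact sum_pos' (fun l _ => sq_nonneg (v l)) ⟨l, mem_univ l, by simpa [sq_pos_iff] using hl⟩

lemma nrm_ne_zero {v : Fin N → ℝ} (hv : v ≠ 0) : nrm v ≠ 0 :=
  Real.sqrt_ne_zero'.2 (sum_sq_pos hv)

lemma sq_nrm (v : Fin N → ℝ) : nrm v ^ 2 = ∑ l, v l ^ 2 :=
  Real.sq_sqrt (sum_nonneg fun l _ => sq_nonneg (v l))

lemma hasDerivAt_nrm_update {v : Fin N → ℝ} (hv : v ≠ 0) (m : Fin N) :
    HasDerivAt (fun t => nrm (update v m t)) (v m / nrm v) (v m) := by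
  have h := (hasDerivAt_sum_sq_update v m).sqrt (by simpa using (sum_sq_pos hv).ne')
  simp only [update_eq_self] at h
  rw [show v m / nrm v = 2 * v m / (2 * nrm v) by ring]
  exact h

end Coordinates

section PoissonBracket

variable {N : ℕ}

lemma pbracket_eq_of_hasDerivAt {F G : (Fin N → ℝ) × (Fin N → ℝ) → ℝ}
    {x : (Fin N → ℝ) × (Fin N → ℝ)} {Fq Fp Gq Gp : Fin N → ℝ}
    (hFq : ∀ m, HasDerivAt (fun t => F (update x.1 m t, x.2)) (Fq m) (x.1 m))
    (hFp : ∀ m, HasDerivAt (fun t => F (x.1, update x.2 m t)) (Fp m) (x.2 m))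
    (hGq : ∀ m, HasDerivAt (fun t => G (update x.1 m t, x.2)) (Gq m) (x.1 m))
    (hGp : ∀ m, HasDerivAt (fun t => G (x.1, update x.2 m t)) (Gp m) (x.2 m)) :
    pbracket F G x = ∑ m, (Fq m * Gp m - Fp m * Gq m) := by
  simp only [pbracket, (hFq _).deriv, (hFp _).deriv, (hGq _).deriv, (hGp _).deriv]

lemma hasDerivAt_J_update_fst (i j m : Fin N) (x : (Fin N → ℝ) × (Fin N → ℝ)) :
    HasDerivAt (fun t => J i j (update x.1 m t, x.2))
      ((if i = m then 1 else 0) * x.2 j - (if j = m then 1 else 0) * x.2 i) (x.1 m) :=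
  ((hasDerivAt_update_apply x.1 m i _).mul_const _).sub
    ((hasDerivAt_update_apply x.1 m j _).mul_const _)

lemma hasDerivAt_J_update_snd (i j m : Fin N) (x : (Fin N → ℝ) × (Fin N → ℝ)) :
    HasDerivAt (fun t => J i j (x.1, update x.2 m t))
      (x.1 i * (if j = m then 1 else 0) - x.1 j * (if i = m then 1 else 0)) (x.2 m) :=
  ((hasDerivAt_update_apply x.2 m j _).const_mul _).sub
    ((hasDerivAt_update_apply x.2 m i _).const_mul _)

/-- `∂R_a/∂q_m` and `∂R_a/∂p_m` for `R = (q·p) p + g q` with `g` a function of `|q|` and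
`|p|²`. -/
def jacQ (q p : Fin N → ℝ) (G C : ℝ) (a m : Fin N) : ℝ :=
  p a * p m + (if a = m then G else 0) + C * q a * q m

def jacP (q p : Fin N → ℝ) (E : ℝ) (a m : Fin N) : ℝ :=
  p a * q m + (if a = m then ∑ l, q l * p l else 0) + E * q a * p m

lemma sum_jacQ_mul_jacP_sub (q p : Fin N → ℝ) (G C E : ℝ) (i j : Fin N) :
    ∑ m, (jacQ q p G C i m * jacP q p E j m - jacP q p E i m * jacQ q p G C j m) =
      (q i * p j - q j * p i) * (G * (1 - E) + C * ∑ m, q m ^ 2 - E * ∑ m, p m ^ 2) := by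
  set s := ∑ l, q l * p l
  have summand : ∀ m, jacQ q p G C i m * jacP q p E j m - jacP q p E i m * jacQ q p G C j m =
      (q i * p j - q j * p i) * (C * q m ^ 2 - E * p m ^ 2) +
        ((if i = m then G * (q i * p j + E * q j * p i) - s * (p i * p j + C * q i * q j)
            else 0) +
          (if j = m then s * (p i * p j + C * q i * q j) - G * (q j * p i + E * q i * p j)
            else 0)) := by
    intro m
    unfold jacQ jacP
    split_ifs <;> subst_vars <;> ring
  simp only [summand, sum_add_distrib, ← mul_sum, sum_sub_distrib, sum_ite_eq, mem_univ, if_true]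
  ring

lemma sum_J_bracket_jac (q p : Fin N → ℝ) (G C E : ℝ) (i j a : Fin N) :
    ∑ m, (((if i = m then 1 else 0) * p j - (if j = m then 1 else 0) * p i) * jacP q p E a m -
        (q i * (if j = m then 1 else 0) - q j * (if i = m then 1 else 0)) * jacQ q p G C a m) =
      (if i = a then (∑ l, q l * p l) * p j + G * q j else 0) -
        (if j = a then (∑ l, q l * p l) * p i + G * q i else 0) := by
  simp only [sub_mul, ite_mul, mul_ite, one_mul, zero_mul, mul_one, mul_zero,
    sum_sub_distrib, sum_ite_eq, mem_univ, if_true]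
  unfold jacQ jacP
  split_ifs <;> subst_vars <;> first | ring1 | simp_all

end PoissonBracket

section RungeLenz

variable {N : ℕ} (η k : ℝ)

/-- `(η H + k) / |q|`, in a form free of `H` and of `1 / |q|`; see `RL_eq`. -/
noncomputable def rlFactor (x : (Fin N → ℝ) × (Fin N → ℝ)) : ℝ :=
  (η * (∑ l, x.2 l ^ 2) / 2 + k) / (η + nrm x.1)

lemma RL_eq {x : (Fin N → ℝ) × (Fin N → ℝ)} (hr : nrm x.1 ≠ 0) (hd : η + nrm x.1 ≠ 0)
    (a : Fin N) :
    RL η k a x = (∑ l, x.1 l * x.2 l) * x.2 a - (∑ l, x.2 l ^ 2) * x.1 a +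
      x.1 a * rlFactor η k x := by
  have hsum : ∑ l, x.2 l * (x.1 l * x.2 a - x.1 a * x.2 l) =
      (∑ l, x.1 l * x.2 l) * x.2 a - (∑ l, x.2 l ^ 2) * x.1 a := by
    simp only [sum_mul, ← sum_sub_distrib]
    exact sum_congr rfl fun l _ => by ring
  rw [RL, hsum, rlFactor, Ham]
  field_simp
  ring

lemma hasDerivAt_rlFactor_update_fst {x : (Fin N → ℝ) × (Fin N → ℝ)} (hq : x.1 ≠ 0)
    (hd : η + nrm x.1 ≠ 0) (m : Fin N) :
    HasDerivAt (fun t => rlFactor η k (update x.1 m t, x.2))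
      (-rlFactor η k x * x.1 m / (nrm x.1 * (η + nrm x.1))) (x.1 m) := by
  have h := (hasDerivAt_const (x.1 m) (η * (∑ l, x.2 l ^ 2) / 2 + k)).fun_div
    ((hasDerivAt_nrm_update hq m).const_add η) (by rwa [update_eq_self])
  rw [update_eq_self] at h
  refine h.congr_deriv ?_
  rw [rlFactor]
  field_simp [nrm_ne_zero hq]
  ring

lemma hasDerivAt_rlFactor_update_snd (x : (Fin N → ℝ) × (Fin N → ℝ)) (m : Fin N) :
    HasDerivAt (fun t => rlFactor η k (x.1, update x.2 m t))
      (η * x.2 m / (η + nrm x.1)) (x.2 m) := by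
  refine ((((hasDerivAt_sum_sq_update x.2 m).const_mul η).div_const 2).add_const k).div_const
    (η + nrm x.1) |>.congr_deriv ?_
  ring

lemma hasDerivAt_RL_update_fst {x : (Fin N → ℝ) × (Fin N → ℝ)} (hq : x.1 ≠ 0)
    (hd : η + nrm x.1 ≠ 0) (a m : Fin N) :
    HasDerivAt (fun t => RL η k a (update x.1 m t, x.2))
      (jacQ x.1 x.2 (rlFactor η k x - ∑ l, x.2 l ^ 2)
        (-rlFactor η k x / (nrm x.1 * (η + nrm x.1))) a m) (x.1 m) := by
  have hform := (((hasDerivAt_sum_update_mul x.1 x.2 m (x.1 m)).mul_const (x.2 a)).fun_sub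
    ((hasDerivAt_update_apply x.1 m a (x.1 m)).const_mul (∑ l, x.2 l ^ 2))).fun_add
    ((hasDerivAt_update_apply x.1 m a (x.1 m)).fun_mul
      (hasDerivAt_rlFactor_update_fst η k hq hd m))
  have hnrm := (hasDerivAt_nrm_update hq m).continuousAt
  refine (hform.congr_of_eventuallyEq ?_).congr_deriv ?_
  · filter_upwards [hnrm.eventually_ne (by rw [update_eq_self]; exact nrm_ne_zero hq),
      (hnrm.const_add η).eventually_ne (by rwa [update_eq_self] : _ ≠ (0 : ℝ))] with t hr hd
    exact RL_eq η k hr hd a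
  · simp only [update_eq_self, Prod.mk.eta, jacQ]
    split_ifs <;> field_simp [nrm_ne_zero hq] <;> ring

lemma hasDerivAt_RL_update_snd {x : (Fin N → ℝ) × (Fin N → ℝ)} (hq : x.1 ≠ 0)
    (hd : η + nrm x.1 ≠ 0) (a m : Fin N) :
    HasDerivAt (fun t => RL η k a (x.1, update x.2 m t))
      (jacP x.1 x.2 (η / (η + nrm x.1) - 2) a m) (x.2 m) := by
  have hform := (((hasDerivAt_sum_mul_update x.2 x.1 m (x.2 m)).fun_mul
    (hasDerivAt_update_apply x.2 m a (x.2 m))).fun_sub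
    ((hasDerivAt_sum_sq_update x.2 m).mul_const (x.1 a))).fun_add
    ((hasDerivAt_rlFactor_update_snd η k x m).const_mul (x.1 a))
  refine (hform.congr_of_eventuallyEq (.of_forall fun t => ?_)).congr_deriv ?_
  · exact RL_eq η k (x := (x.1, update x.2 m t)) (nrm_ne_zero hq) hd a
  · simp only [update_eq_self, jacP]
    split_ifs <;> field_simp <;> ring

lemma jac_bracket_coeff_eq {x : (Fin N → ℝ) × (Fin N → ℝ)} (hd : η + nrm x.1 ≠ 0) :
    (rlFactor η k x - ∑ l, x.2 l ^ 2) * (1 - (η / (η + nrm x.1) - 2)) +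
        -rlFactor η k x / (nrm x.1 * (η + nrm x.1)) * ∑ l, x.1 l ^ 2 -
        (η / (η + nrm x.1) - 2) * ∑ l, x.2 l ^ 2 = -2 * Ham η k x := by
  rw [← sq_nrm x.1, rlFactor, Ham]
  field_simp
  ring

end RungeLenz

/-- On the region where H < 0, the Runge–Lenz components and the angular
momenta close the so(N+1) Lie–Poisson algebra: in particular
{R_i, R_j} = −2 H J_{ij} and {J_{ij}, R_k} = δ_{ik}R_j − δ_{jk}R_i. -/
theorem runge_lenz_soN1 {N : ℕ} (η k : ℝ)
    (x : (Fin N → ℝ) × (Fin N → ℝ)) (hx : x.1 ≠ 0)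
    (hH : Ham η k x < 0) :
    (∀ i j : Fin N,
      pbracket (RL η k i) (RL η k j) x = -2 * Ham η k x * J i j x) ∧
    (∀ i j m : Fin N,
      pbracket (J i j) (RL η k m) x =
        (if i = m then RL η k j x else 0) -
        (if j = m then RL η k i x else 0)) := by
  -- where `η + |q| = 0`, division by zero gives `H = 0`
  have hd : η + nrm x.1 ≠ 0 := fun h => hH.ne (by simp [Ham, h])
  have hRq := hasDerivAt_RL_update_fst η k hx hd
  have hRp := hasDerivAt_RL_update_snd η k hx hd
  refine ⟨fun i j => ?_, fun i j a => ?_⟩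
  · rw [pbracket_eq_of_hasDerivAt (hRq i) (hRp i) (hRq j) (hRp j), sum_jacQ_mul_jacP_sub,
      jac_bracket_coeff_eq η k hd, J]
    ring
  · rw [pbracket_eq_of_hasDerivAt (hasDerivAt_J_update_fst i j · x)
      (hasDerivAt_J_update_snd i j · x) (hRq a) (hRp a), sum_J_bracket_jac,
      RL_eq η k (nrm_ne_zero hx) hd i, RL_eq η k (nrm_ne_zero hx) hd j]
    split_ifs <;> ring
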